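/- (Scalar Trajectory Locking, simultaneous form.) There is a measurable map u: ℝ^K → [0,1], namely u(ε) = F_Y(max_{j≠k} ε_j − ε_k), such that: u(ε) is uniformly distributed on [0,1] when ε has i.i.d. standard Gaussian coordinates, and for every γ ∈ (0,1), setting r = F_Y^{-1}(γ), α̃ = r/√(1+r²), σ̃ = 1/√(1+r²), and w = α̃·e_k + σ̃·ε, the projection satisfies P(w) = x0 if u(ε) < γ and P(w) = e_K if u(ε) ≥ γ, simultaneously for all γ along the trajectory with ε fixed. -/

import Mathlib

/-!
The scalar `Y(ε) = max_{j≠k} ε_j − ε_k` is continuous, takes every real value, and each level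
set `{Y = y}` lies in the finitely many hyperplanes `ε_j = ε_k + y` (`j ≠ k`), which are null for
the product Gaussian since `ε_j` and `ε_k` are independent and atomless. So the law of `Y` charges
every open interval and has no atoms, i.e. `F_Y` is a continuous strictly increasing bijection
onto `(0, 1)`, and `F_Y(Y)` is uniform on `[0, 1]` (probability integral transform).

For the locking, `w_j = σ̃ ε_j` for `j ≠ k` and `w_k = α̃ + σ̃ ε_k`, so with `σ̃ > 0` the projection
keeps `x0` iff `Y(ε) < α̃ / σ̃ = r`, iff `u(ε) = F_Y(Y(ε)) < F_Y(r) = γ`.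
-/

open MeasureTheory ProbabilityTheory

noncomputable section

/-- The maximum of the coordinates of `w` over all indices `j ≠ k`. -/
def maxOther {K : ℕ} (hK : 2 ≤ K) (k : Fin K) (w : Fin K → ℝ) : ℝ :=
  (Finset.univ.erase k).sup'
    (by
      apply Finset.card_pos.mp
      rw [Finset.card_erase_of_mem (Finset.mem_univ k), Finset.card_univ, Fintype.card_fin]
      omega) w

/-- The index of the mask state `[M]` (the last coordinate). -/
def maskIdx {K : ℕ} (hK : 2 ≤ K) : Fin K := ⟨K - 1, by omega⟩

/-- The projection operator `P`: it keeps the clean one-hot vector `x0 = e_k` if the signal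
coordinate strictly dominates all other coordinates, otherwise collapses to the mask
vector `e_K`. -/
def proj {K : ℕ} (hK : 2 ≤ K) (k : Fin K) (w : Fin K → ℝ) : Fin K → ℝ :=
  if maxOther hK k w < w k then Pi.single k 1 else Pi.single (maskIdx hK) 1

/-- The `K`-fold product of standard Gaussian measures: the law of `ε` with i.i.d.
standard Gaussian `N(0,1)` coordinates. -/
def gpi (K : ℕ) : Measure (Fin K → ℝ) :=
  Measure.pi fun _ => gaussianReal 0 1

/-- The scalar `Y(ε) = max_{j ≠ k} ε_j − ε_k`. -/
def Yfun {K : ℕ} (hK : 2 ≤ K) (k : Fin K) (ε : Fin K → ℝ) : ℝ :=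
  maxOther hK k ε - ε k

/-- `F_Y`, the cumulative distribution function of `Y = max_{j ≠ k} ε_j − ε_k` for `ε` with
i.i.d. standard Gaussian coordinates. -/
def FY {K : ℕ} (hK : 2 ≤ K) (k : Fin K) : ℝ → ℝ :=
  fun y => cdf ((gpi K).map (Yfun hK k)) y

open Set

theorem StieltjesFunction.continuousAt_of_measure_singleton (f : StieltjesFunction ℝ) {x : ℝ}
    (h : f.measure {x} = 0) : ContinuousAt f x := by
  rw [f.mono.continuousAt_iff_leftLim_eq_rightLim, f.rightLim_eq]
  rw [f.measure_singleton, ENNReal.ofReal_eq_zero] at h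
  linarith [f.mono.leftLim_le (le_refl x)]

namespace ProbabilityTheory

variable {μ : Measure ℝ} [IsProbabilityMeasure μ]

theorem continuous_cdf [NullSingletonClass μ] : Continuous (cdf μ) :=
  continuous_iff_continuousAt.2 fun x =>
    (cdf μ).continuousAt_of_measure_singleton (by rw [measure_cdf]; exact measure_singleton x)

theorem strictMono_cdf (h : ∀ a b, a < b → μ (Ioc a b) ≠ 0) : StrictMono (cdf μ) := by
  intro a b hab
  have := h a b hab
  rw [← measure_cdf (μ := μ), StieltjesFunction.measure_Ioc, Ne, ENNReal.ofReal_eq_zero] at this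
  linarith

omit [IsProbabilityMeasure μ] in
theorem cdf_pos (h : StrictMono (cdf μ)) (x : ℝ) : 0 < cdf μ x :=
  (cdf_nonneg μ (x - 1)).trans_lt (h (sub_one_lt x))

theorem Ioo_subset_range_cdf [NullSingletonClass μ] : Ioo 0 1 ⊆ range (cdf μ) := by
  intro t ⟨ht0, ht1⟩
  obtain ⟨a, ha⟩ := ((tendsto_cdf_atBot μ).eventually (eventually_lt_nhds ht0)).exists
  obtain ⟨b, hb⟩ := ((tendsto_cdf_atTop μ).eventually (eventually_gt_nhds ht1)).exists
  exact intermediate_value_univ a b continuous_cdf ⟨ha.le, hb.le⟩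

theorem map_cdf_eq_volume_restrict_Icc [NullSingletonClass μ] (h : StrictMono (cdf μ)) :
    μ.map (cdf μ) = volume.restrict (Icc 0 1) := by
  have hF : Measurable (cdf μ) := continuous_cdf.measurable
  have : IsProbabilityMeasure (μ.map (cdf μ)) := Measure.isProbabilityMeasure_map hF.aemeasurable
  have : IsFiniteMeasure (volume.restrict (Icc (0 : ℝ) 1)) := by
    constructor; simp
  refine Measure.ext_of_Iic _ _ fun t => ?_
  have hIcc : Iic t ∩ Icc 0 1 = Icc 0 (min t 1) := by
    ext; simp only [mem_inter_iff, mem_Iic, mem_Icc, le_inf_iff]; tauto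
  rw [Measure.map_apply hF measurableSet_Iic, Measure.restrict_apply measurableSet_Iic, hIcc]
  rcases le_or_gt t 0 with ht0 | ht0
  · have hpre : cdf μ ⁻¹' Iic t = ∅ :=
      eq_empty_of_forall_notMem fun y hy => (ht0.trans_lt (cdf_pos h y)).not_ge hy
    rw [hpre, measure_empty, min_eq_left (ht0.trans zero_le_one), Real.volume_Icc, sub_zero,
      ENNReal.ofReal_of_nonpos ht0]
  rcases lt_or_ge t 1 with ht1 | ht1
  · obtain ⟨y, rfl⟩ := Ioo_subset_range_cdf (μ := μ) ⟨ht0, ht1⟩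
    rw [show cdf μ ⁻¹' Iic (cdf μ y) = Iic y from ext fun _ => h.le_iff_le,
      min_eq_left (cdf_le_one μ y), Real.volume_Icc, sub_zero, ofReal_cdf]
  · have hpre : cdf μ ⁻¹' Iic t = univ :=
      eq_univ_of_forall fun y => (cdf_le_one μ y).trans ht1
    rw [hpre, measure_univ, min_eq_right ht1]
    simp

end ProbabilityTheory

theorem MeasureTheory.Measure.prod_setOf_fst_eq_snd_add (μ ν : Measure ℝ) [SFinite ν]
    [NullSingletonClass ν] (y : ℝ) : (μ.prod ν) {p | p.1 = p.2 + y} = 0 := by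
  rw [Measure.measure_prod_null (measurableSet_eq_fun measurable_fst (by fun_prop))]
  refine Filter.Eventually.of_forall fun a => ?_
  have hslice : Prod.mk a ⁻¹' {p : ℝ × ℝ | p.1 = p.2 + y} = {a - y} := by
    ext b; simp only [mem_preimage, mem_ofPred_eq, mem_singleton_iff]
    constructor <;> intro <;> linarith
  simp only [hslice, measure_singleton, Pi.zero_apply]

theorem MeasureTheory.Measure.pi_setOf_apply_eq_apply_add {ι : Type*} [Fintype ι]
    (μ : ι → Measure ℝ) [∀ i, IsProbabilityMeasure (μ i)] {i j : ι} (hij : i ≠ j)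
    [NullSingletonClass (μ j)] (y : ℝ) : Measure.pi μ {x | x i = x j + y} = 0 := by
  have hind : IndepFun (fun x : ι → ℝ => x i) (fun x => x j) (Measure.pi μ) :=
    (iIndepFun_pi (X := fun _ => id) fun _ => aemeasurable_id).indepFun hij
  have hlaw := hind.map_prod_eq_prod_map_map (measurable_pi_apply i).aemeasurable
    (measurable_pi_apply j).aemeasurable
  rw [(measurePreserving_eval μ i).map_eq, (measurePreserving_eval μ j).map_eq] at hlaw
  have hmeas : MeasurableSet {p : ℝ × ℝ | p.1 = p.2 + y} :=
    measurableSet_eq_fun measurable_fst (by fun_prop)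
  rw [← Measure.prod_setOf_fst_eq_snd_add (μ i) (μ j) y, ← hlaw,
    Measure.map_apply (by fun_prop) hmeas]
  rfl

section maxOther

variable {K : ℕ} (hK : 2 ≤ K) (k : Fin K)

theorem maxOther_congr {v w : Fin K → ℝ} (h : ∀ j ≠ k, v j = w j) :
    maxOther hK k v = maxOther hK k w :=
  Finset.sup'_congr _ rfl fun j hj => h j (Finset.ne_of_mem_erase hj)

theorem maxOther_const (c : ℝ) : maxOther hK k (fun _ => c) = c :=
  Finset.sup'_const _ c

theorem maxOther_smul {c : ℝ} (hc : 0 ≤ c) (w : Fin K → ℝ) :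
    maxOther hK k (c • w) = c * maxOther hK k w :=
  (Finset.apply_sup'_eq_sup'_comp _ (c * ·) fun _ _ => mul_max_of_nonneg _ _ hc).symm

theorem exists_ne_maxOther_eq (w : Fin K → ℝ) : ∃ j ≠ k, maxOther hK k w = w j := by
  obtain ⟨j, hj, hmax⟩ := Finset.exists_mem_eq_sup' _ w
  exact ⟨j, Finset.ne_of_mem_erase hj, hmax⟩

theorem continuous_maxOther : Continuous (maxOther hK k) :=
  Continuous.finset_sup'_apply _ fun j _ => continuous_apply j

end maxOther

theorem ProbabilityTheory.isOpenPosMeasure_gaussianReal (μ : ℝ) {v : NNReal} (hv : v ≠ 0) :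
    (gaussianReal μ v).IsOpenPosMeasure :=
  (gaussianReal_absolutelyContinuous' μ hv).isOpenPosMeasure

instance (K : ℕ) : IsProbabilityMeasure (gpi K) := by
  unfold gpi; infer_instance

instance (K : ℕ) : (gpi K).IsOpenPosMeasure := by
  have := isOpenPosMeasure_gaussianReal 0 one_ne_zero
  unfold gpi; infer_instance

section Yfun

variable {K : ℕ} (hK : 2 ≤ K) (k : Fin K)

theorem continuous_Yfun : Continuous (Yfun hK k) :=
  (continuous_maxOther hK k).sub (continuous_apply k)

theorem Yfun_single_neg (t : ℝ) : Yfun hK k (Pi.single k (-t)) = t := by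
  have hmax : maxOther hK k (Pi.single k (-t)) = 0 :=
    (maxOther_congr hK k fun j hj => Pi.single_eq_of_ne hj _).trans (maxOther_const hK k 0)
  simp [Yfun, hmax]

theorem gpi_Yfun_preimage_singleton (y : ℝ) : gpi K (Yfun hK k ⁻¹' {y}) = 0 := by
  have hsub : Yfun hK k ⁻¹' {y} ⊆ ⋃ j ∈ {j | j ≠ k}, {ε : Fin K → ℝ | ε j = ε k + y} := by
    intro ε hε
    obtain ⟨j, hjk, hj⟩ := exists_ne_maxOther_eq hK k ε
    have hY : maxOther hK k ε - ε k = y := hε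
    exact mem_biUnion hjk (by simp only [mem_ofPred_eq]; linarith)
  refine measure_mono_null hsub ((measure_biUnion_null_iff (to_countable _)).2 fun j hj => ?_)
  have := nullSingletonClass_gaussianReal (μ := 0) one_ne_zero
  exact Measure.pi_setOf_apply_eq_apply_add _ hj y

instance : IsProbabilityMeasure ((gpi K).map (Yfun hK k)) :=
  Measure.isProbabilityMeasure_map (continuous_Yfun hK k).aemeasurable

instance : NullSingletonClass ((gpi K).map (Yfun hK k)) where
  measure_singleton y := by
    rw [Measure.map_apply (continuous_Yfun hK k).measurable (measurableSet_singleton y)]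
    exact gpi_Yfun_preimage_singleton hK k y

theorem map_Yfun_Ioc_ne_zero {a b : ℝ} (hab : a < b) : (gpi K).map (Yfun hK k) (Ioc a b) ≠ 0 := by
  rw [Measure.map_apply (continuous_Yfun hK k).measurable measurableSet_Ioc]
  refine (measure_mono (preimage_mono Ioo_subset_Ioc_self)).trans_lt' ?_ |>.ne'
  refine (isOpen_Ioo.preimage (continuous_Yfun hK k)).measure_pos _
    ⟨Pi.single k (-((a + b) / 2)), ?_⟩
  rw [mem_preimage, Yfun_single_neg, mem_Ioo]
  constructor <;> linarith

theorem strictMono_FY : StrictMono (FY hK k) :=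
  strictMono_cdf fun _ _ => map_Yfun_Ioc_ne_zero hK k

theorem continuous_FY : Continuous (FY hK k) := continuous_cdf

end Yfun

section proj

variable {K : ℕ} (hK : 2 ≤ K) (k : Fin K)

theorem maxOther_lt_apply_iff_Yfun_lt {α σ : ℝ} (hσ : 0 < σ) (ε : Fin K → ℝ) :
    maxOther hK k (α • Pi.single k 1 + σ • ε) < (α • Pi.single k 1 + σ • ε : Fin K → ℝ) k ↔
      Yfun hK k ε < α / σ := by
  have hoff : ∀ j ≠ k, (α • Pi.single k 1 + σ • ε : Fin K → ℝ) j = (σ • ε) j := fun j hj => by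
    simp [hj]
  rw [maxOther_congr hK k hoff, maxOther_smul hK k hσ.le, lt_div_iff₀ hσ, Yfun]
  simp only [Pi.add_apply, Pi.smul_apply, Pi.single_eq_same, smul_eq_mul, mul_one]
  constructor <;> intro h <;> linarith

theorem proj_smul_single_add_smul {α σ : ℝ} (hσ : 0 < σ) (ε : Fin K → ℝ) :
    proj hK k (α • Pi.single k 1 + σ • ε) =
      if Yfun hK k ε < α / σ then Pi.single k 1 else Pi.single (maskIdx hK) 1 :=
  if_congr (maxOther_lt_apply_iff_Yfun_lt hK k hσ ε) rfl rfl

end proj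

theorem stmt10_general (K : ℕ) (hK : 2 ≤ K) (k : Fin K) :
    ∃ u : (Fin K → ℝ) → ℝ,
      Measurable u
      ∧ (∀ ε, u ε ∈ Set.Icc (0 : ℝ) 1)
      ∧ u = (fun ε => FY hK k (maxOther hK k ε - ε k))
      ∧ (gpi K).map u = volume.restrict (Set.Icc (0 : ℝ) 1)
      ∧ ∀ γ ∈ Set.Ioo (0 : ℝ) 1, ∀ r : ℝ, FY hK k r = γ → ∀ ε : Fin K → ℝ,
          (u ε < γ →
            proj hK k ((r / Real.sqrt (1 + r ^ 2)) • (Pi.single k 1 : Fin K → ℝ)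
                + (1 / Real.sqrt (1 + r ^ 2)) • ε)
              = (Pi.single k 1 : Fin K → ℝ))
          ∧ (γ ≤ u ε →
            proj hK k ((r / Real.sqrt (1 + r ^ 2)) • (Pi.single k 1 : Fin K → ℝ)
                + (1 / Real.sqrt (1 + r ^ 2)) • ε)
              = (Pi.single (maskIdx hK) 1 : Fin K → ℝ)) := by
  refine ⟨FY hK k ∘ Yfun hK k, (continuous_FY hK k).measurable.comp
    (continuous_Yfun hK k).measurable, fun ε => ⟨cdf_nonneg _ _, cdf_le_one _ _⟩, rfl, ?_, ?_⟩
  · rw [← Measure.map_map (continuous_FY hK k).measurable (continuous_Yfun hK k).measurable]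
    exact map_cdf_eq_volume_restrict_Icc (strictMono_FY hK k)
  · rintro γ - r rfl ε
    have hσ : 0 < 1 / Real.sqrt (1 + r ^ 2) := by positivity
    have hratio : r / Real.sqrt (1 + r ^ 2) / (1 / Real.sqrt (1 + r ^ 2)) = r := by
      field_simp
    rw [proj_smul_single_add_smul hK k hσ, hratio, Function.comp_apply,
      (strictMono_FY hK k).lt_iff_lt, ← not_lt, (strictMono_FY hK k).lt_iff_lt]
    exact ⟨fun h => if_pos h, fun h => if_neg h⟩

/-- Scalar Trajectory Locking, simultaneous form: There is a measurable map
`u : ℝ^K → [0,1]`, namely `u(ε) = F_Y(max_{j≠k} ε_j − ε_k)`, such that `u` is uniformly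
distributed on `[0,1]` under the i.i.d. Gaussian law, and for every `γ ∈ (0,1)`, setting
`r = F_Y⁻¹(γ)`, `α̃ = r/√(1+r²)`, `σ̃ = 1/√(1+r²)`, `w = α̃ • e_k + σ̃ • ε`, we have
`P(w) = x0` if `u(ε) < γ` and `P(w) = e_K` if `u(ε) ≥ γ`, simultaneously for all `γ`
along the trajectory with `ε` fixed. -/
theorem stmt10 (K : ℕ) (hK : 2 ≤ K) (k : Fin K) (hk : k ≠ maskIdx hK) :
    ∃ u : (Fin K → ℝ) → ℝ,
      Measurable u
      ∧ (∀ ε, u ε ∈ Set.Icc (0 : ℝ) 1)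
      ∧ u = (fun ε => FY hK k (maxOther hK k ε - ε k))
      ∧ (gpi K).map u = volume.restrict (Set.Icc (0 : ℝ) 1)
      ∧ ∀ γ ∈ Set.Ioo (0 : ℝ) 1, ∀ r : ℝ, FY hK k r = γ → ∀ ε : Fin K → ℝ,
          (u ε < γ →
            proj hK k ((r / Real.sqrt (1 + r ^ 2)) • (Pi.single k 1 : Fin K → ℝ)
                + (1 / Real.sqrt (1 + r ^ 2)) • ε)
              = (Pi.single k 1 : Fin K → ℝ))
          ∧ (γ ≤ u ε →
            proj hK k ((r / Real.sqrt (1 + r ^ 2)) • (Pi.single k 1 : Fin K → ℝ)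
                + (1 / Real.sqrt (1 + r ^ 2)) • ε)
              = (Pi.single (maskIdx hK) 1 : Fin K → ℝ)) :=
  stmt10_general K hK k
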